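/- arXiv:2510.16848 — 3 statements merged into one kernel-verified Lean document; each statement's English description precedes it below -/
import Mathlib

section
/- Let A be a geodesic in the hyperbolic plane H², let t > 0, and let C(t,A) = {w ∈ H² : d(w,A) = t} be a connected component of the hypercycle at distance t from A. If z₁ and z are two points on the same connected component of C(t,A), then the length of the arc of C(t,A) between z₁ and z (i.e. the distance in the induced path metric on C(t,A)) is at most 2·sinh(d(z₁,z)/2), where d is the hyperbolic distance. -/
open Real

/-- Hyperbolic distance in the upper half-plane model `{z : ℂ | 0 < z.im}`,
via the standard identity `2·sinh(d(z,w)/2) = |z − w| / √(Im z · Im w)`. -/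
noncomputable def hdist2 (z w : ℂ) : ℝ :=
  2 * Real.arsinh (‖z - w‖ / (2 * Real.sqrt (z.im * w.im)))

/-!
For points `z₁ = s₁·e^{iθ}`, `z = s₂·e^{iθ}` on a ray through the origin, the formula defining
`hdist2` gives `2·sinh(d/2) = |s₁ − s₂| / (sin θ · √(s₁s₂))`. Writing `r = √(s₂/s₁)`, this is
`|r − r⁻¹| / sin θ = 2·sinh|log r| / sin θ`, and `sinh x ≥ x` for `x ≥ 0` bounds it below by
`2|log r| / sin θ = |log(s₂/s₁)| / sin θ`.
-/
lemma Real.two_mul_abs_log_le_abs_sub_inv {r : ℝ} (hr : 0 < r) :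
    2 * |log r| ≤ |r - r⁻¹| := by
  calc 2 * |log r| ≤ 2 * sinh |log r| := by gcongr; exact self_le_sinh_iff.mpr (abs_nonneg _)
    _ = |r - r⁻¹| := by
      rw [← abs_sinh, sinh_log hr, abs_div, abs_two]; ring

lemma Real.abs_log_div_le_abs_sub_div_sqrt_mul {a b : ℝ} (ha : 0 < a) (hb : 0 < b) :
    |log (b / a)| ≤ |b - a| / √(a * b) := by
  have hr : 0 < √b / √a := by positivity
  have hlog : log (b / a) = 2 * log (√b / √a) := by
    conv_lhs => rw [← sq_sqrt hb.le, ← sq_sqrt ha.le, ← div_pow, log_pow]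
    norm_num
  have hsub : |√b / √a - (√b / √a)⁻¹| = |b - a| / √(a * b) := by
    rw [sqrt_mul ha.le, ← abs_of_pos (by positivity : 0 < √a * √b), ← abs_div]
    congr 1
    field_simp
    rw [sq_sqrt hb.le, sq_sqrt ha.le]
  rw [hlog, abs_mul, abs_two, ← hsub]
  exact two_mul_abs_log_le_abs_sub_inv hr

lemma two_mul_sinh_half_hdist2_ofReal_mul_exp (θ s₁ s₂ : ℝ) :
    2 * sinh (hdist2 (s₁ * Complex.exp (θ * Complex.I)) (s₂ * Complex.exp (θ * Complex.I)) / 2)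
      = |s₁ - s₂| / (|sin θ| * √(s₁ * s₂)) := by
  have him (s : ℝ) : (s * Complex.exp (θ * Complex.I)).im = s * sin θ := by
    simp [Complex.exp_mul_I, Complex.mul_im, Complex.sin_ofReal_re]
  have hnorm : ‖(s₁ : ℂ) * Complex.exp (θ * Complex.I) - s₂ * Complex.exp (θ * Complex.I)‖
      = |s₁ - s₂| := by
    rw [← sub_mul, norm_mul, Complex.norm_exp_ofReal_mul_I, mul_one, ← Complex.ofReal_sub,
      Complex.norm_real, norm_eq_abs]
  have hsqrt : √(s₁ * sin θ * (s₂ * sin θ)) = |sin θ| * √(s₁ * s₂) := by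
    rw [show s₁ * sin θ * (s₂ * sin θ) = sin θ ^ 2 * (s₁ * s₂) by ring,
      sqrt_mul (sq_nonneg _), sqrt_sq_eq_abs]
  rw [hdist2, mul_div_cancel_left₀ _ two_ne_zero, sinh_arsinh, hnorm, him, him, hsqrt]
  field_simp

theorem hypercycle_arc_le_general (θ s₁ s₂ : ℝ)
    (hθ₀ : 0 < θ) (hθ₁ : θ ≤ Real.pi / 2)
    (hs₁ : 0 < s₁) (hs₂ : 0 < s₂)
    (z₁ z : ℂ)
    (hz₁ : z₁ = (s₁ : ℂ) * Complex.exp (θ * Complex.I))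
    (hz : z = (s₂ : ℂ) * Complex.exp (θ * Complex.I)) :
    |Real.log (s₂ / s₁)| / Real.sin θ ≤ 2 * Real.sinh (hdist2 z₁ z / 2) := by
  have hsin : 0 < sin θ := sin_pos_of_pos_of_lt_pi hθ₀ (by linarith [pi_pos])
  rw [hz₁, hz, two_mul_sinh_half_hdist2_ofReal_mul_exp, abs_of_pos hsin, mul_comm, ← div_div,
    abs_sub_comm]
  gcongr
  exact abs_log_div_le_abs_sub_div_sqrt_mul hs₁ hs₂

/-- Hypercycle arc-length estimate (Proposition 6 of the paper).  In the upper
half-plane model, with the geodesic `A` being the positive imaginary axis, a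
connected component of the hypercycle `C(t,A)` at distance `t > 0` from `A` is
the Euclidean ray `{s·e^{iθ} : s > 0}` where `cosh t · sin θ = 1`, `0 < θ ≤ π/2`.
The induced path metric on the hypercycle between `z₁ = s₁·e^{iθ}` and
`z = s₂·e^{iθ}` equals `|log(s₂/s₁)|/sin θ`, and it is bounded above by
`2·sinh(d(z₁,z)/2)` where `d` is the hyperbolic distance. -/
theorem hypercycle_arc_le (t θ s₁ s₂ : ℝ) (ht : 0 < t)
    (hθ₀ : 0 < θ) (hθ₁ : θ ≤ Real.pi / 2)
    (hcos : Real.cosh t * Real.sin θ = 1)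
    (hs₁ : 0 < s₁) (hs₂ : 0 < s₂)
    (z₁ z : ℂ)
    (hz₁ : z₁ = (s₁ : ℂ) * Complex.exp (θ * Complex.I))
    (hz : z = (s₂ : ℂ) * Complex.exp (θ * Complex.I)) :
    |Real.log (s₂ / s₁)| / Real.sin θ ≤ 2 * Real.sinh (hdist2 z₁ z / 2) :=
  hypercycle_arc_le_general θ s₁ s₂ hθ₀ hθ₁ hs₁ hs₂ z₁ z hz₁ hz
end

section
/- In the upper half-plane model, let A be the geodesic given by the positive imaginary axis and let z₁, z be points on the same component of the hypercycle C(t,A) at distance t from A, with |z₁| = 1 and |z| = r ≥ 1. Then cosh(t) ≤ (2/log r)·sinh(d(z₁,z)/2), where d is the hyperbolic distance. -/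
/-!
On the ray through `z₁ = e^{iθ}` we have `sinh (d(z₁, r z₁)/2) = (r - 1) / (2 sin θ √r)`, while
`cosh t = 1 / sin θ`; so the claim reduces to `log r ≤ (r - 1)/√r`, which is `u ≤ sinh u` at
`u = log √r`.
-/

open Real

theorem sinh_hdist2_half (z w : ℂ) :
    sinh (hdist2 z w / 2) = ‖z - w‖ / (2 * √(z.im * w.im)) := by
  rw [hdist2, mul_div_cancel_left₀ _ two_ne_zero, sinh_arsinh]

theorem sinh_hdist2_half_ofReal_mul {z : ℂ} (hz : 0 ≤ z.im) {r : ℝ} (hr : 0 ≤ r) :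
    sinh (hdist2 z (r * z) / 2) = |r - 1| * ‖z‖ / (2 * (z.im * √r)) := by
  have hnorm : ‖z - r * z‖ = |r - 1| * ‖z‖ := by
    rw [← one_sub_mul, norm_mul, ← Complex.ofReal_one, ← Complex.ofReal_sub,
      Complex.norm_real, norm_eq_abs, abs_sub_comm]
  have hsqrt : √(z.im * (r * z).im) = z.im * √r := by
    rw [Complex.im_ofReal_mul, ← mul_assoc, mul_comm z.im r, mul_assoc, ← sq,
      sqrt_mul hr, sqrt_sq hz, mul_comm]
  rw [sinh_hdist2_half, hnorm, hsqrt]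

theorem log_le_sub_one_div_sqrt {r : ℝ} (hr : 1 ≤ r) : log r ≤ (r - 1) / √r := by
  have hs : 0 < √r := sqrt_pos.mpr (by linarith)
  have hu : 0 ≤ log √r := log_nonneg (one_le_sqrt.mpr hr)
  have key : log √r ≤ (√r - (√r)⁻¹) / 2 := sinh_log hs ▸ self_le_sinh_iff.mpr hu
  have hsr : (√r - (√r)⁻¹) = (r - 1) / √r := by
    field_simp
    rw [sq_sqrt (by linarith)]
  rw [log_sqrt (by linarith)] at key
  linarith

theorem cosh_le_of_hypercycle_general (t θ r : ℝ)
    (hcos : Real.cosh t * Real.sin θ = 1)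
    (hr : 1 < r)
    (z₁ z : ℂ)
    (hz₁ : z₁ = Complex.exp (θ * Complex.I))
    (hz : z = (r : ℂ) * Complex.exp (θ * Complex.I)) :
    Real.cosh t ≤ (2 / Real.log r) * Real.sinh (hdist2 z₁ z / 2) := by
  have hsin : sin θ = (cosh t)⁻¹ := eq_inv_of_mul_eq_one_right hcos
  have hsin_pos : 0 < sin θ := hsin ▸ inv_pos.mpr (cosh_pos t)
  have hlog : 0 < log r := log_pos hr
  rw [hz₁, hz,
    sinh_hdist2_half_ofReal_mul (by rw [Complex.exp_ofReal_mul_I_im]; exact hsin_pos.le)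
      (by linarith), Complex.exp_ofReal_mul_I_im, Complex.norm_exp_ofReal_mul_I,
    abs_of_pos (by linarith), mul_one]
  calc cosh t = 1 / sin θ := by rw [hsin, one_div, inv_inv]
    _ ≤ (r - 1) / √r / (log r * sin θ) := by
        rw [div_le_div_iff₀ hsin_pos (by positivity), one_mul]
        exact mul_le_mul_of_nonneg_right (log_le_sub_one_div_sqrt hr.le) hsin_pos.le
    _ = 2 / log r * ((r - 1) / (2 * (sin θ * √r))) := by field_simp

/-- In the upper half-plane model, let `A` be the positive imaginary axis and let
`z₁ = e^{iθ}`, `z = r·e^{iθ}` (with `r > 1`) lie on the same component of the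
hypercycle `C(t,A)` at distance `t` from `A`, so that `cosh t · sin θ = 1`.
Then `cosh t ≤ (2/log r)·sinh(d(z₁,z)/2)` where `d` is the hyperbolic distance
(`log r` is the distance between the orthogonal projections of `z₁, z` to `A`). -/
theorem cosh_le_of_hypercycle (t θ r : ℝ) (ht : 0 ≤ t)
    (hθ₀ : 0 < θ) (hθ₁ : θ ≤ Real.pi / 2)
    (hcos : Real.cosh t * Real.sin θ = 1)
    (hr : 1 < r)
    (z₁ z : ℂ)
    (hz₁ : z₁ = Complex.exp (θ * Complex.I))
    (hz : z = (r : ℂ) * Complex.exp (θ * Complex.I)) :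
    Real.cosh t ≤ (2 / Real.log r) * Real.sinh (hdist2 z₁ z / 2) :=
  cosh_le_of_hypercycle_general t θ r hcos hr z₁ z hz₁ hz
end

section
/- Let g be a loxodromic isometry of the upper half-space model of H⁴ of the form g = θ ∘ λ where λ: x ↦ λx is a dilation with factor λ > 1 and θ is a rotation fixing the vertical axis A through 0; suppose g(0) = 0. Let z be a point with d(z, A) > 2, and let P be the horosphere centered at ∞ through z. Then the angle α between P and the Euclidean segment from z to g(z), normalized to lie in [0, π/2], satisfies α ≤ π/3. -/
/-- Euclidean distance on `ℝ⁴` (coordinates indexed by `Fin 4`). -/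
noncomputable def eDist (x y : Fin 4 → ℝ) : ℝ :=
  Real.sqrt (∑ i, (x i - y i) ^ 2)

/-- Hyperbolic distance in the upper half-space model
`H⁴ = {x : Fin 4 → ℝ | 0 < x 3}`. -/
noncomputable def hDist (x y : Fin 4 → ℝ) : ℝ :=
  2 * Real.arsinh (eDist x y / (2 * Real.sqrt (x 3 * y 3)))

set_option maxHeartbeats 1000000

/-- Lemma 4, Step 1, of the paper.  Let `g = Θ ∘ λ` be a loxodromic isometry of
the upper half-space model of `H⁴` fixing `0` and `∞`: `λ` is the dilation
`x ↦ λ·x` with `λ > 1` and `Θ` is a (Euclidean, origin-fixing) rotation fixing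
the vertical axis `A = {x | xᵢ = 0 for i ≠ 3}` pointwise and preserving the
height coordinate `x₄`.  Let `z` be a point of `H⁴` with `d(z,A) > 2`
(equivalently `|z|/z₄ > cosh 2`), and `P` the horosphere centered at `∞`
through `z` (the horizontal hyperplane `{x | x₄ = z₄}`).  Then the angle `α`
between `P` and the Euclidean segment from `z` to `g(z)`, normalized to lie in
`[0, π/2]` (so that `sin α = |(g z)₄ − z₄| / |g z − z|`), satisfies
`α ≤ π/3`. -/
theorem loxodromic_angle_le (Θ : (Fin 4 → ℝ) → (Fin 4 → ℝ))
    (hΘiso : ∀ x y : Fin 4 → ℝ, eDist (Θ x) (Θ y) = eDist x y)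
    (hΘ0 : Θ 0 = 0)
    (hΘheight : ∀ x : Fin 4 → ℝ, Θ x 3 = x 3)
    (hΘaxis : ∀ x : Fin 4 → ℝ, (∀ i, i ≠ 3 → x i = 0) → Θ x = x)
    (lam : ℝ) (hlam : 1 < lam)
    (g : (Fin 4 → ℝ) → (Fin 4 → ℝ))
    (hg : g = fun x i => lam * Θ x i)
    (z : Fin 4 → ℝ) (hz : 0 < z 3)
    (hfar : Real.cosh 2 < eDist z 0 / z 3)
    (α : ℝ) (hα : α = Real.arcsin (|g z 3 - z 3| / eDist (g z) z)) :
    α ≤ Real.pi / 3 := by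
  set w : Fin 4 → ℝ := Θ z with hw
  have hw3 : w 3 = z 3 := hΘheight z
  set N : ℝ := ∑ i, (z i) ^ 2 with hN
  have hNnonneg : 0 ≤ N := Finset.sum_nonneg fun i _ => sq_nonneg _
  -- norm preservation
  have hNw : ∑ i, (w i) ^ 2 = N := by
    have h := hΘiso z 0
    rw [hΘ0] at h
    unfold eDist at h
    have h' : (∑ i, (w i - (0 : Fin 4 → ℝ) i) ^ 2) = ∑ i, (z i - (0 : Fin 4 → ℝ) i) ^ 2 := by
      have := (Real.sqrt_inj (Finset.sum_nonneg fun i _ => sq_nonneg _)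
        (Finset.sum_nonneg fun i _ => sq_nonneg _)).mp h
      exact this
    simpa [Pi.zero_apply, sub_zero] using h'
  -- inner product bound
  have hS : ∑ i, w i * z i ≤ N := by
    have hcs := Finset.sum_mul_sq_le_sq_mul_sq (Finset.univ.erase (3 : Fin 4)) w z
    have hmem : (3 : Fin 4) ∈ (Finset.univ : Finset (Fin 4)) := Finset.mem_univ _
    have hwsplit : ∑ i ∈ Finset.univ.erase 3, (w i) ^ 2 + (w 3) ^ 2 = ∑ i, (w i) ^ 2 :=
      Finset.sum_erase_add _ _ hmem
    have hzsplit : ∑ i ∈ Finset.univ.erase 3, (z i) ^ 2 + (z 3) ^ 2 = N :=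
      Finset.sum_erase_add _ _ hmem
    have hssplit : ∑ i ∈ Finset.univ.erase 3, w i * z i + w 3 * z 3 = ∑ i, w i * z i :=
      Finset.sum_erase_add _ _ hmem
    set A : ℝ := ∑ i ∈ Finset.univ.erase 3, (z i) ^ 2 with hA
    have hAnonneg : 0 ≤ A := Finset.sum_nonneg fun i _ => sq_nonneg _
    have hwA : ∑ i ∈ Finset.univ.erase 3, (w i) ^ 2 = A := by
      have := hNw
      nlinarith [hwsplit, hzsplit, hw3]
    set s : ℝ := ∑ i ∈ Finset.univ.erase 3, w i * z i with hs
    have hsq : s ^ 2 ≤ A ^ 2 := by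
      calc s ^ 2 ≤ (∑ i ∈ Finset.univ.erase 3, (w i) ^ 2) *
          ∑ i ∈ Finset.univ.erase 3, (z i) ^ 2 := hcs
        _ = A ^ 2 := by rw [hwA]; ring
    have hsA : s ≤ A := by nlinarith [sq_nonneg (s - A), sq_nonneg (s + A)]
    calc ∑ i, w i * z i = s + w 3 * z 3 := hssplit.symm
      _ ≤ A + (z 3) ^ 2 := by rw [hw3]; nlinarith
      _ = N := hzsplit
  -- distance lower bound
  have hgz : ∀ i, g z i = lam * w i := by intro i; rw [hg]
  have hQ : ∑ i, (g z i - z i) ^ 2 ≥ (lam - 1) ^ 2 * N := by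
    have hexp : ∑ i, (g z i - z i) ^ 2 =
        lam ^ 2 * (∑ i, (w i) ^ 2) - 2 * lam * (∑ i, w i * z i) + N := by
      rw [Finset.mul_sum, Finset.mul_sum]
      rw [← Finset.sum_sub_distrib, ← Finset.sum_add_distrib]
      apply Finset.sum_congr rfl
      intro i _
      rw [hgz i]; ring
    rw [hexp, hNw]
    nlinarith [hS, hlam]
  have hfar' : Real.cosh 2 * z 3 < eDist z 0 := (lt_div_iff₀ hz).mp hfar
  have hnorm_pos : 0 < eDist z 0 := by nlinarith [Real.cosh_pos (2:ℝ), hz]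
  have hN_eq : eDist z 0 = Real.sqrt N := by
    unfold eDist; congr 1; apply Finset.sum_congr rfl; intro i _; simp
  have hD : (lam - 1) * eDist z 0 ≤ eDist (g z) z := by
    rw [hN_eq]
    unfold eDist
    calc (lam - 1) * Real.sqrt N = Real.sqrt ((lam - 1) ^ 2 * N) := by
          rw [Real.sqrt_mul (sq_nonneg _), Real.sqrt_sq (by linarith)]
      _ ≤ Real.sqrt (∑ i, (g z i - z i) ^ 2) := Real.sqrt_le_sqrt hQ
  -- cosh 2 > 3/2
  have hcosh : (3:ℝ)/2 < Real.cosh 2 := by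
    have h1 : (3:ℝ) < Real.exp 2 := by
      have := Real.add_one_lt_exp (x := 2) (by norm_num)
      linarith
    have h2 : (0:ℝ) < Real.exp (-2) := Real.exp_pos _
    rw [Real.cosh_eq]
    linarith
  have hzn : (3:ℝ)/2 * z 3 < eDist z 0 := by nlinarith [hfar', hcosh, hz]
  -- the ratio
  have hnum : |g z 3 - z 3| = (lam - 1) * z 3 := by
    rw [hgz 3, hw3]
    rw [abs_of_nonneg (by nlinarith)]
    ring
  have hDpos : 0 < eDist (g z) z := lt_of_lt_of_le (by nlinarith) hD
  have hratio : |g z 3 - z 3| / eDist (g z) z ≤ 2/3 := by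
    rw [hnum]
    rw [div_le_iff₀ hDpos]
    calc (lam - 1) * z 3 ≤ 2/3 * ((lam - 1) * eDist z 0) := by nlinarith
      _ ≤ 2/3 * eDist (g z) z := by nlinarith
  have h23 : (2:ℝ)/3 ≤ Real.sqrt 3 / 2 := by
    rw [le_div_iff₀ (by norm_num)]
    have : (4:ℝ)/3 ≤ Real.sqrt 3 := by
      rw [show (4:ℝ)/3 = Real.sqrt ((4/3)^2) by rw [Real.sqrt_sq]; norm_num]
      exact Real.sqrt_le_sqrt (by norm_num)
    linarith
  rw [hα]
  calc Real.arcsin (|g z 3 - z 3| / eDist (g z) z)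
      ≤ Real.arcsin (Real.sqrt 3 / 2) := Real.monotone_arcsin (le_trans hratio h23)
    _ = Real.pi / 3 := by
        rw [← Real.sin_pi_div_three, Real.arcsin_sin (by linarith [Real.pi_pos])
          (by linarith [Real.pi_pos])]
end
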